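/- The minimum value f(t) = min_{τ>0} F(τ; t, δ) is nonnegative, strictly increasing and concave in t on (0,∞), with derivative f'(t) = 1/(2τ(t)) where τ(t) is the minimizer; moreover f(t) ≤ C(√(tδ)/2 + 1) for some absolute constant C. -/
import Mathlib

open Real Set MeasureTheory

/-- standard normal density -/
noncomputable def stdPDF (x : ℝ) : ℝ := Real.exp (-x ^ 2 / 2) / Real.sqrt (2 * Real.pi)

/-- The objective F(τ; t, δ). -/
noncomputable def Fobj (δ t τ : ℝ) : ℝ :=
  τ / 2 * (δ - 1 / 2) + t / (2 * τ)
    + τ / 2 * ∫ x in Set.Ioi (2 / τ), (x - 2 / τ) ^ 2 * stdPDF x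

lemma stdPDF_nonneg (x : ℝ) : 0 ≤ stdPDF x := by
  unfold stdPDF; positivity

lemma stdPDF_cont : Continuous stdPDF := by
  unfold stdPDF; fun_prop

lemma integrable_pow_stdPDF (n : ℕ) :
    Integrable (fun x : ℝ => x ^ n * Real.exp (-x ^ 2 / 2)) := by
  have h := integrable_rpow_mul_exp_neg_mul_sq (b := (1/2 : ℝ)) (by norm_num)
    (s := (n : ℝ)) (lt_of_lt_of_le neg_one_lt_zero (Nat.cast_nonneg n))
  have h2 : (fun x : ℝ => x ^ ((n : ℝ)) * Real.exp (-(1/2) * x ^ 2))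
      = fun x : ℝ => x ^ n * Real.exp (-x ^ 2 / 2) := by
    funext x
    rw [Real.rpow_natCast]
    ring_nf
  rw [h2] at h
  exact h

lemma integrable_sub_sq_stdPDF (u : ℝ) :
    Integrable (fun x : ℝ => (x - u) ^ 2 * stdPDF x) := by
  have : (fun x : ℝ => (x - u) ^ 2 * stdPDF x)
      = fun x => (Real.sqrt (2 * Real.pi))⁻¹ * (x ^ 2 * Real.exp (-x ^ 2 / 2))
        + ((-2 * u) * (Real.sqrt (2 * Real.pi))⁻¹) * (x ^ 1 * Real.exp (-x ^ 2 / 2))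
        + (u ^ 2 * (Real.sqrt (2 * Real.pi))⁻¹) * (x ^ 0 * Real.exp (-x ^ 2 / 2)) := by
    funext x; unfold stdPDF; ring
  rw [this]
  exact (((integrable_pow_stdPDF 2).const_mul _).add
    ((integrable_pow_stdPDF 1).const_mul _)).add ((integrable_pow_stdPDF 0).const_mul _)

lemma maxsq_le (a : ℝ) : (max a 0) ^ 2 ≤ a ^ 2 := by
  rcases le_or_gt a 0 with h | h
  · rw [max_eq_right h]; simpa using sq_nonneg a
  · rw [max_eq_left h.le]

lemma integrable_maxsq_stdPDF (u : ℝ) :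
    Integrable (fun x : ℝ => (max (x - u) 0) ^ 2 * stdPDF x) := by
  refine (integrable_sub_sq_stdPDF u).mono' ?_ ?_
  · exact (Continuous.mul (by fun_prop) stdPDF_cont).aestronglyMeasurable
  · filter_upwards with x
    have h2 : (0:ℝ) ≤ (max (x - u) 0) ^ 2 * stdPDF x :=
      mul_nonneg (sq_nonneg _) (stdPDF_nonneg x)
    rw [Real.norm_eq_abs, abs_of_nonneg h2]
    exact mul_le_mul_of_nonneg_right (maxsq_le _) (stdPDF_nonneg x)

lemma G_eq (u : ℝ) :
    ∫ x in Set.Ioi u, (x - u) ^ 2 * stdPDF x = ∫ x, (max (x - u) 0) ^ 2 * stdPDF x := by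
  rw [← setIntegral_eq_integral_of_forall_compl_eq_zero
    (s := Set.Ioi u) (f := fun x => (max (x - u) 0) ^ 2 * stdPDF x)
    (fun x hx => by
      have hx' : x ≤ u := by simpa using hx
      have : max (x - u) 0 = 0 := max_eq_right (by linarith)
      simp only [this]
      ring)]
  refine setIntegral_congr_fun measurableSet_Ioi (fun x hx => ?_)
  have hx' : u < x := hx
  have : max (x - u) 0 = x - u := max_eq_left (by linarith)
  simp only [this]

lemma G_nonneg (u : ℝ) : 0 ≤ ∫ x in Set.Ioi u, (x - u) ^ 2 * stdPDF x :=
  setIntegral_nonneg measurableSet_Ioi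
    (fun x _ => mul_nonneg (sq_nonneg _) (stdPDF_nonneg x))

noncomputable def Ksec : ℝ := ∫ x, x ^ 2 * stdPDF x

lemma Ksec_nonneg : 0 ≤ Ksec :=
  integral_nonneg (fun x => mul_nonneg (sq_nonneg _) (stdPDF_nonneg x))

lemma G_le (u : ℝ) (hu : 0 ≤ u) :
    (∫ x in Set.Ioi u, (x - u) ^ 2 * stdPDF x) ≤ Ksec := by
  have hx2 : Integrable (fun x : ℝ => x ^ 2 * stdPDF x) := by
    have h := integrable_sub_sq_stdPDF 0
    simpa using h
  have h1 : (∫ x in Set.Ioi u, (x - u) ^ 2 * stdPDF x)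
      ≤ ∫ x in Set.Ioi u, x ^ 2 * stdPDF x := by
    refine setIntegral_mono_on (integrable_sub_sq_stdPDF u).integrableOn
      hx2.integrableOn measurableSet_Ioi (fun x hx => ?_)
    simp only [Set.mem_Ioi] at hx
    have h3 := stdPDF_nonneg x
    have h2 : (x - u) ^ 2 ≤ x ^ 2 := by nlinarith
    exact mul_le_mul_of_nonneg_right h2 h3
  exact h1.trans (setIntegral_le_integral hx2
    (Filter.Eventually.of_forall fun x => mul_nonneg (sq_nonneg _) (stdPDF_nonneg x)))

lemma Fobj_shift (δ t s τ : ℝ) : Fobj δ s τ = Fobj δ t τ + (s - t) / (2 * τ) := by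
  unfold Fobj; ring

lemma max_scale (σ x : ℝ) (hσ : 0 < σ) : max (x - 2/σ) 0 = (max (σ*x - 2) 0) / σ := by
  rcases le_or_gt (σ*x - 2) 0 with h | h
  · rw [max_eq_right h, max_eq_right, zero_div]
    rw [sub_nonpos, le_div_iff₀ hσ]
    linarith [mul_comm x σ]
  · rw [max_eq_left h.le, max_eq_left]
    · field_simp
    · rw [sub_nonneg, div_le_iff₀ hσ]
      linarith [mul_comm x σ]

lemma hval_convex (x τ1 τ2 a b : ℝ) (h1 : 0 < τ1) (h2 : 0 < τ2)
    (ha : 0 ≤ a) (hb : 0 ≤ b) (hab : a + b = 1) :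
    (a*τ1+b*τ2)/2 * (max (x - 2/(a*τ1+b*τ2)) 0)^2
      ≤ a * (τ1/2 * (max (x - 2/τ1) 0)^2) + b * (τ2/2 * (max (x - 2/τ2) 0)^2) := by
  have hτ : 0 < a*τ1+b*τ2 := by
    rcases ha.lt_or_eq with ha' | ha'
    · nlinarith [mul_pos ha' h1, mul_nonneg hb h2.le]
    · have hb1 : b = 1 := by linarith
      rw [← ha', hb1]; simpa using h2
  have key : ∀ σ : ℝ, 0 < σ → σ/2 * (max (x - 2/σ) 0)^2 = (max (σ*x - 2) 0)^2/(2*σ) := by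
    intro σ hσ
    rw [max_scale σ x hσ, div_pow]
    field_simp
  rw [key _ hτ, key _ h1, key _ h2]
  set M1 := max (τ1*x - 2) 0 with hM1
  set M2 := max (τ2*x - 2) 0 with hM2
  have hM1n : 0 ≤ M1 := le_max_right _ _
  have hM2n : 0 ≤ M2 := le_max_right _ _
  have hM : max ((a*τ1+b*τ2)*x - 2) 0 ≤ a*M1 + b*M2 := by
    refine max_le ?_ (by positivity)
    have e : (a*τ1+b*τ2)*x - 2 = a*(τ1*x-2) + b*(τ2*x-2) := by
      have : a = 1 - b := by linarith
      rw [this]; ring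
    rw [e]
    exact add_le_add (mul_le_mul_of_nonneg_left (le_max_left _ _) ha)
      (mul_le_mul_of_nonneg_left (le_max_left _ _) hb)
  have hMsq : (max ((a*τ1+b*τ2)*x - 2) 0)^2 ≤ (a*M1 + b*M2)^2 := by
    apply pow_le_pow_left₀ (le_max_right _ _) hM
  have hCS : (a*M1 + b*M2)^2/(2*(a*τ1+b*τ2)) ≤ a * (M1^2/(2*τ1)) + b * (M2^2/(2*τ2)) := by
    rw [div_le_iff₀ (by positivity)]
    have expand : (a * (M1^2/(2*τ1)) + b * (M2^2/(2*τ2))) * (2*(a*τ1+b*τ2))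
        - (a*M1 + b*M2)^2 = a*b*(τ2*M1 - τ1*M2)^2/(τ1*τ2) := by
      field_simp
      ring
    nlinarith [mul_pos h1 h2, sq_nonneg (τ2*M1 - τ1*M2), mul_nonneg (mul_nonneg ha hb) (sq_nonneg (τ2*M1 - τ1*M2)), div_nonneg (mul_nonneg (mul_nonneg ha hb) (sq_nonneg (τ2*M1 - τ1*M2))) (mul_pos h1 h2).le]
  calc (max ((a*τ1+b*τ2)*x - 2) 0)^2/(2*(a*τ1+b*τ2))
      ≤ (a*M1 + b*M2)^2/(2*(a*τ1+b*τ2)) := by gcongr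
    _ ≤ _ := hCS

lemma gpart_repr (σ : ℝ) (hσ : 0 < σ) :
    σ/2 * ∫ x in Set.Ioi (2/σ), (x - 2/σ)^2 * stdPDF x
      = ∫ x, σ/2 * ((max (x - 2/σ) 0)^2 * stdPDF x) := by
  rw [G_eq, integral_const_mul]

lemma gpart_convexOn :
    ConvexOn ℝ (Set.Ioi (0:ℝ)) (fun τ : ℝ => τ/2 * ∫ x in Set.Ioi (2/τ), (x - 2/τ)^2 * stdPDF x) := by
  refine ⟨convex_Ioi 0, fun τ1 h1 τ2 h2 a b ha hb hab => ?_⟩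
  simp only [smul_eq_mul]
  have h1' : (0:ℝ) < τ1 := h1
  have h2' : (0:ℝ) < τ2 := h2
  have hτ : 0 < a*τ1+b*τ2 := by
    rcases ha.lt_or_eq with ha' | ha'
    · nlinarith [mul_pos ha' h1', mul_nonneg hb h2'.le]
    · have hb1 : b = 1 := by linarith
      rw [← ha', hb1]; simpa using h2'
  have hint : ∀ σ : ℝ, Integrable (fun x => σ/2 * ((max (x - 2/σ) 0)^2 * stdPDF x)) :=
    fun σ => (integrable_maxsq_stdPDF _).const_mul _
  rw [gpart_repr _ hτ, gpart_repr _ h1', gpart_repr _ h2',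
    ← integral_const_mul a, ← integral_const_mul b,
    ← integral_add ((hint τ1).const_mul a) ((hint τ2).const_mul b)]
  refine integral_mono (hint _) (((hint τ1).const_mul a).add ((hint τ2).const_mul b))
    (fun x => ?_)
  have key := mul_le_mul_of_nonneg_right
    (hval_convex x τ1 τ2 a b h1' h2' ha hb hab) (stdPDF_nonneg x)
  simp only []
  linear_combination key

lemma lin_convexOn (δ : ℝ) : ConvexOn ℝ (Set.Ioi (0:ℝ)) (fun τ : ℝ => τ/2*(δ-1/2)) :=
  ⟨convex_Ioi 0, fun x _ y _ a b _ _ _ => le_of_eq (by simp only [smul_eq_mul]; ring)⟩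

lemma inv_convexOn (t : ℝ) (ht : 0 ≤ t) :
    ConvexOn ℝ (Set.Ioi (0:ℝ)) (fun τ : ℝ => t/(2*τ)) := by
  have h := (strictConvexOn_zpow (m := (-1 : ℤ)) (by norm_num) (by norm_num)).convexOn
  have h2 := h.smul (c := t/2) (by positivity)
  have he : (fun τ : ℝ => t/(2*τ)) = (t/2) • (fun x : ℝ => x ^ (-1 : ℤ)) := by
    funext τ
    simp only [Pi.smul_apply, smul_eq_mul, zpow_neg, zpow_one]
    ring
  rw [he]
  exact h2

lemma Fobj_convexOn (δ t : ℝ) (ht : 0 ≤ t) : ConvexOn ℝ (Set.Ioi (0:ℝ)) (Fobj δ t) := by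
  have h := ((lin_convexOn δ).add (inv_convexOn t ht)).add gpart_convexOn
  have he : Fobj δ t = ((fun τ : ℝ => τ/2*(δ-1/2)) + fun τ : ℝ => t/(2*τ))
      + fun τ : ℝ => τ/2 * ∫ x in Set.Ioi (2/τ), (x - 2/τ)^2 * stdPDF x := by
    funext τ
    simp only [Pi.add_apply]
    unfold Fobj
    ring
  rw [he]
  exact h

lemma Fobj_strictmid (δ t : ℝ) (ht : 0 < t) {τ1 τ2 : ℝ}
    (h1 : 0 < τ1) (h2 : 0 < τ2) (hne : τ1 ≠ τ2) :
    Fobj δ t ((τ1+τ2)/2) < (Fobj δ t τ1 + Fobj δ t τ2)/2 := by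
  have hP := (lin_convexOn δ).add gpart_convexOn
  have hmid := hP.2 (mem_Ioi.mpr h1) (mem_Ioi.mpr h2)
    (by norm_num : (0:ℝ) ≤ 1/2) (by norm_num : (0:ℝ) ≤ 1/2) (by norm_num)
  simp only [Pi.add_apply, smul_eq_mul] at hmid
  have hmid' : (1:ℝ)/2*τ1 + 1/2*τ2 = (τ1+τ2)/2 := by ring
  rw [hmid'] at hmid
  have hstrict : t/(2*((τ1+τ2)/2)) < (t/(2*τ1) + t/(2*τ2))/2 := by
    have hd : (t/(2*τ1) + t/(2*τ2))/2 - t/(2*((τ1+τ2)/2))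
        = t*(τ1-τ2)^2/(4*τ1*τ2*(τ1+τ2)) := by
      field_simp
      ring
    have hpos : 0 < t*(τ1-τ2)^2/(4*τ1*τ2*(τ1+τ2)) := by
      have : τ1 - τ2 ≠ 0 := sub_ne_zero.mpr hne
      positivity
    linarith
  have e1 : ∀ τ : ℝ, Fobj δ t τ = (τ/2*(δ-1/2) + τ/2 * ∫ x in Set.Ioi (2/τ), (x - 2/τ)^2 * stdPDF x) + t/(2*τ) := by
    intro τ; unfold Fobj; ring
  rw [e1, e1, e1]
  linarith

set_option maxHeartbeats 2000000 in
theorem fmin_properties (δ : ℝ) (hδ : 1 / 2 < δ) (τmin f : ℝ → ℝ)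
    (hτ : ∀ t : ℝ, 0 < t → τmin t ∈ Set.Ioi (0 : ℝ) ∧
      IsMinOn (Fobj δ t) (Set.Ioi (0 : ℝ)) (τmin t))
    (hf : ∀ t : ℝ, 0 < t → f t = Fobj δ t (τmin t)) :
    (∀ t : ℝ, 0 < t → 0 ≤ f t) ∧
    StrictMonoOn f (Set.Ioi (0 : ℝ)) ∧
    ConcaveOn ℝ (Set.Ioi (0 : ℝ)) f ∧
    (∀ t : ℝ, 0 < t → HasDerivAt f (1 / (2 * τmin t)) t) ∧
    ∃ C : ℝ, ∀ t : ℝ, 0 < t → f t ≤ C * (Real.sqrt (t * δ) / 2 + 1) := by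
  have hτpos : ∀ t : ℝ, 0 < t → 0 < τmin t := fun t ht => (hτ t ht).1
  have hmin : ∀ t : ℝ, 0 < t → ∀ τ : ℝ, 0 < τ → f t ≤ Fobj δ t τ := by
    intro t ht τ hτ'
    rw [hf t ht]
    exact (hτ t ht).2 (mem_Ioi.mpr hτ')
  have key : ∀ s t : ℝ, 0 < s → 0 < t → f s ≤ f t + (s - t)/(2 * τmin t) := by
    intro s t hs ht
    calc f s ≤ Fobj δ s (τmin t) := hmin s hs _ (hτpos t ht)
      _ = Fobj δ t (τmin t) + (s-t)/(2*τmin t) := Fobj_shift δ t s _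
      _ = f t + (s-t)/(2*τmin t) := by rw [hf t ht]
  have hFnonneg : ∀ t τ : ℝ, 0 < t → 0 < τ → 0 ≤ Fobj δ t τ := by
    intro t τ ht hτ'
    unfold Fobj
    have hG := G_nonneg (2/τ)
    have h1 : 0 ≤ τ/2*(δ-1/2) := by nlinarith
    have h2 : 0 ≤ t/(2*τ) := by positivity
    have h3 : 0 ≤ τ/2 * ∫ x in Set.Ioi (2/τ), (x - 2/τ)^2 * stdPDF x :=
      mul_nonneg (by positivity) hG
    linarith
  have hnonneg : ∀ t : ℝ, 0 < t → 0 ≤ f t := by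
    intro t ht
    rw [hf t ht]
    exact hFnonneg t _ ht (hτpos t ht)
  -- continuity of τmin
  have tcont : ∀ t : ℝ, 0 < t → ∀ ε : ℝ, 0 < ε →
      ∃ d : ℝ, 0 < d ∧ ∀ s : ℝ, 0 < s → |s - t| < d → |τmin s - τmin t| < ε := by
    intro t ht ε hε
    set τ0 := τmin t with hτ0def
    have hτ0 : 0 < τ0 := hτpos t ht
    set ε' := min ε (τ0/2) with hε'def
    have hε'pos : 0 < ε' := lt_min hε (by linarith)
    have hε'2 : ε' ≤ τ0/2 := min_le_right _ _
    have hε'1 : ε' ≤ ε := min_le_left _ _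
    have hconv := Fobj_convexOn δ t ht.le
    have hminT : IsMinOn (Fobj δ t) (Set.Ioi 0) τ0 := (hτ t ht).2
    have hlo : 0 < τ0 - ε' := by linarith
    have hgt : ∀ p : ℝ, 0 < p → p ≠ τ0 → Fobj δ t τ0 < Fobj δ t p := by
      intro p hp hne
      rcases (isMinOn_iff.mp hminT p (mem_Ioi.mpr hp)).lt_or_eq with h | h
      · exact h
      exfalso
      have hmidpos : (0:ℝ) < (p + τ0)/2 := by linarith
      have hsm := Fobj_strictmid δ t ht hp hτ0 hne
      have hm2 := isMinOn_iff.mp hminT _ (mem_Ioi.mpr hmidpos)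
      rw [← h] at hsm
      linarith
    set m := min (Fobj δ t (τ0-ε')) (Fobj δ t (τ0+ε')) - Fobj δ t τ0 with hmdef
    have hm : 0 < m := by
      have ha := hgt (τ0-ε') hlo (by linarith)
      have hb := hgt (τ0+ε') (by linarith) (by linarith)
      have := lt_min ha hb
      rw [hmdef]
      linarith [lt_min ha hb]
    have hfar : ∀ τ : ℝ, 0 < τ → ε' ≤ |τ - τ0| → Fobj δ t τ0 + m ≤ Fobj δ t τ := by
      intro τ hτp hfarp
      rcases le_abs.mp hfarp with hr | hl
      · -- τ0 + ε' ≤ τ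
        have hple : τ0 + ε' ≤ τ := by linarith
        have hFp : Fobj δ t (τ0+ε') ≤ Fobj δ t τ := by
          rcases eq_or_lt_of_le hple with he | hlt
          · rw [he]
          · exact hconv.le_right_of_left_le (mem_Ioi.mpr hτ0) (mem_Ioi.mpr hτp)
              (by rw [openSegment_eq_Ioo (by linarith : τ0 < τ)]
                  exact ⟨by linarith, hlt⟩)
              (isMinOn_iff.mp hminT _ (mem_Ioi.mpr (by linarith : (0:ℝ) < τ0 + ε')))
        have hmm : m ≤ Fobj δ t (τ0+ε') - Fobj δ t τ0 := by
          have := min_le_right (Fobj δ t (τ0-ε')) (Fobj δ t (τ0+ε'))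
          rw [hmdef]; linarith
        linarith
      · -- τ ≤ τ0 - ε'
        have hple : τ ≤ τ0 - ε' := by linarith
        have hFp : Fobj δ t (τ0-ε') ≤ Fobj δ t τ := by
          rcases eq_or_lt_of_le hple with he | hlt
          · rw [← he]
          · exact hconv.le_left_of_right_le (mem_Ioi.mpr hτp) (mem_Ioi.mpr hτ0)
              (by rw [openSegment_eq_Ioo (by linarith : τ < τ0)]
                  exact ⟨hlt, by linarith⟩)
              (isMinOn_iff.mp hminT _ (mem_Ioi.mpr hlo))
        have hmm : m ≤ Fobj δ t (τ0-ε') - Fobj δ t τ0 := by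
          have := min_le_left (Fobj δ t (τ0-ε')) (Fobj δ t (τ0+ε'))
          rw [hmdef]; linarith
        linarith
    set F0 := Fobj δ t τ0 with hF0def
    have hF0n : 0 ≤ F0 := hFnonneg t τ0 ht hτ0
    set aa := min (τ0/2) (t/(4*(F0+m+1))) with haadef
    have haa : 0 < aa := lt_min (by linarith) (by positivity)
    have haat : F0 + m + 1 ≤ t/(4*aa) := by
      have h1 : aa ≤ t/(4*(F0+m+1)) := min_le_right _ _
      rw [le_div_iff₀ (by positivity)]
      rw [le_div_iff₀ (by positivity)] at h1
      nlinarith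
    set d := min (t/2) (2*aa*m/3) with hddef
    have hd : 0 < d := lt_min (by linarith) (by positivity)
    refine ⟨d, hd, fun s hs hsd => ?_⟩
    by_contra hcon
    push_neg at hcon
    have hτs := hτpos s hs
    have hcon' : ε' ≤ |τmin s - τ0| := le_trans hε'1 hcon
    have hsd1 : |s - t| < 2*aa*m/3 := lt_of_lt_of_le hsd (min_le_right _ _)
    have hsd2 : t/2 < s := by
      have h1 := lt_of_lt_of_le hsd (min_le_left _ _)
      rw [abs_lt] at h1
      linarith [h1.1]
    have haaτ0 : aa ≤ τ0 := le_trans (min_le_left _ _) (by linarith)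
    have hfs_up : Fobj δ s (τmin s) ≤ F0 + m/3 := by
      have h1 : Fobj δ s (τmin s) ≤ Fobj δ s τ0 :=
        isMinOn_iff.mp (hτ s hs).2 _ (mem_Ioi.mpr hτ0)
      rw [Fobj_shift δ t s τ0] at h1
      have h2 : (s-t)/(2*τ0) ≤ |s-t|/(2*τ0) := by
        gcongr
        exact le_abs_self _
      have h3 : |s-t|/(2*τ0) ≤ m/3 := by
        rw [div_le_div_iff₀ (by positivity) (by norm_num)]
        nlinarith [abs_nonneg (s-t)]
      linarith
    rcases le_or_gt aa (τmin s) with hcase | hcase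
    · have h4 := hfar (τmin s) hτs hcon'
      have h5 : Fobj δ s (τmin s) = Fobj δ t (τmin s) + (s-t)/(2*τmin s) :=
        Fobj_shift δ t s _
      have h6 : -(m/3) ≤ (s-t)/(2*τmin s) := by
        have h7 : |s-t|/(2*τmin s) ≤ m/3 := by
          rw [div_le_div_iff₀ (by positivity) (by norm_num)]
          nlinarith [abs_nonneg (s-t)]
        have h8 : -((s-t)/(2*τmin s)) ≤ |s-t|/(2*τmin s) := by
          rw [← neg_div]
          gcongr
          exact neg_le_abs _
        linarith
      linarith
    · have h7 : s/(2*τmin s) ≤ Fobj δ s (τmin s) := by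
        unfold Fobj
        have hG := G_nonneg (2/τmin s)
        have t1 : 0 ≤ τmin s/2*(δ-1/2) :=
          mul_nonneg (by positivity) (by linarith)
        have t3 : 0 ≤ τmin s/2 * ∫ x in Set.Ioi (2/τmin s), (x - 2/τmin s)^2 * stdPDF x :=
          mul_nonneg (by positivity) hG
        linarith
      have h8 : t/(4*aa) ≤ s/(2*τmin s) := by
        rw [div_le_div_iff₀ (by positivity) (by positivity)]
        have e1 := mul_lt_mul_of_pos_right hsd2 (show (0:ℝ) < 4*τmin s by positivity)
        have e2 := mul_le_mul_of_nonneg_left hcase.le (show (0:ℝ) ≤ 4*s by positivity)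
        linarith
      linarith
  refine ⟨hnonneg, ?_, ?_, ?_, ?_⟩
  · -- StrictMonoOn
    intro s hs t ht hst
    have hs' : (0:ℝ) < s := hs
    have ht' : (0:ℝ) < t := ht
    have hk := key s t hs' ht'
    have hτt := hτpos t ht'
    have hneg : (s - t)/(2*τmin t) < 0 :=
      div_neg_of_neg_of_pos (by linarith) (by linarith)
    linarith
  · -- ConcaveOn
    refine ⟨convex_Ioi 0, fun x hx y hy a b ha hb hab => ?_⟩
    have hx' : (0:ℝ) < x := hx
    have hy' : (0:ℝ) < y := hy
    have hz : (0:ℝ) < a*x+b*y := by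
      rcases ha.lt_or_eq with ha' | ha'
      · nlinarith [mul_pos ha' hx', mul_nonneg hb hy'.le]
      · have hb1 : b = 1 := by linarith
        rw [← ha', hb1]; simpa using hy'
    simp only [smul_eq_mul]
    have hτz := hτpos _ hz
    have k1 := key x (a*x+b*y) hx' hz
    have k2 := key y (a*x+b*y) hy' hz
    have comb : a*((x - (a*x+b*y))/(2*τmin (a*x+b*y)))
        + b*((y - (a*x+b*y))/(2*τmin (a*x+b*y)))
        = ((a*x+b*y)*(1-(a+b)))/(2*τmin (a*x+b*y)) := by ring
    rw [hab] at comb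
    simp only [sub_self, mul_zero, zero_div] at comb
    have c1 := mul_le_mul_of_nonneg_left k1 ha
    have c2 := mul_le_mul_of_nonneg_left k2 hb
    have : a * f x + b * f y ≤ (a+b) * f (a*x+b*y) := by
      calc a * f x + b * f y
          ≤ a*(f (a*x+b*y) + (x - (a*x+b*y))/(2*τmin (a*x+b*y)))
            + b*(f (a*x+b*y) + (y - (a*x+b*y))/(2*τmin (a*x+b*y))) :=
            add_le_add c1 c2
        _ = (a+b) * f (a*x+b*y)
            + (a*((x - (a*x+b*y))/(2*τmin (a*x+b*y)))
              + b*((y - (a*x+b*y))/(2*τmin (a*x+b*y)))) := by ring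
        _ = (a+b) * f (a*x+b*y) := by rw [comb]; ring
    rw [hab] at this
    linarith
  · -- HasDerivAt
    intro t ht
    rw [hasDerivAt_iff_isLittleO, Asymptotics.isLittleO_iff]
    intro c hc
    have hτ0 : 0 < τmin t := hτpos t ht
    obtain ⟨d, hd, hcont⟩ := tcont t ht (min (τmin t/2) (c*(τmin t)^2))
      (lt_min (by linarith) (by positivity))
    rw [Metric.eventually_nhds_iff]
    refine ⟨min d (t/2), lt_min hd (by linarith), fun s hdist => ?_⟩
    rw [Real.dist_eq] at hdist
    have hs : 0 < s := by
      have h1 := lt_of_lt_of_le hdist (min_le_right _ _)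
      rw [abs_lt] at h1
      linarith [h1.1]
    have hds : |s - t| < d := lt_of_lt_of_le hdist (min_le_left _ _)
    have hτc := hcont s hs hds
    have hτs := hτpos s hs
    have hτc1 : |τmin s - τmin t| < τmin t/2 := lt_of_lt_of_le hτc (min_le_left _ _)
    have hτc2 : |τmin s - τmin t| < c*(τmin t)^2 := lt_of_lt_of_le hτc (min_le_right _ _)
    have hτs2 : τmin t/2 ≤ τmin s := by
      rw [abs_lt] at hτc1
      linarith [hτc1.1]
    have hgg : |1/(2*τmin s) - 1/(2*τmin t)| ≤ c := by
      have he : 1/(2*τmin s) - 1/(2*τmin t) = (τmin t - τmin s)/(2*τmin s*τmin t) := by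
        field_simp
      rw [he, abs_div, abs_of_pos (show (0:ℝ) < 2*τmin s*τmin t by positivity)]
      rw [div_le_iff₀ (by positivity)]
      have h1 : |τmin t - τmin s| ≤ c*(τmin t)^2 := by
        rw [abs_sub_comm]; exact hτc2.le
      have h2 : (τmin t)^2 ≤ 2*τmin s*τmin t := by nlinarith [hτs2, hτ0]
      nlinarith [hc.le, h1, h2]
    have k1 := key s t hs ht
    have k2 := key t s ht hs
    have hD1 : f s - f t - (s-t)*(1/(2*τmin t)) ≤ 0 := by
      have : (s-t)/(2*τmin t) = (s-t)*(1/(2*τmin t)) := by ring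
      linarith [this ▸ k1]
    have hD2 : (s-t)*(1/(2*τmin s) - 1/(2*τmin t)) ≤ f s - f t - (s-t)*(1/(2*τmin t)) := by
      have he2 : (t-s)/(2*τmin s) = -((s-t)*(1/(2*τmin s))) := by ring
      have : f t ≤ f s + (t-s)/(2*τmin s) := k2
      rw [he2] at this
      linarith [this]
    rw [Real.norm_eq_abs, Real.norm_eq_abs, smul_eq_mul]
    have habs : |(s-t)*(1/(2*τmin s) - 1/(2*τmin t))| ≤ c * |s - t| := by
      rw [abs_mul]
      calc |s-t| * |1/(2*τmin s) - 1/(2*τmin t)| ≤ |s-t| * c :=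
            mul_le_mul_of_nonneg_left hgg (abs_nonneg _)
        _ = c * |s-t| := by ring
    rw [abs_le] at habs ⊢
    constructor
    · have he3 : (s - t) * (1/(2*τmin t)) = (s-t) • (1/(2*τmin t)) := by
        simp [smul_eq_mul]
      linarith [habs.1, hD2]
    · have : (0:ℝ) ≤ c * |s - t| := mul_nonneg hc.le (abs_nonneg _)
      linarith [hD1]
  · -- upper bound
    refine ⟨2*Real.sqrt 2*((δ-1/2)/2 + 1/2 + Ksec/2), fun t ht => ?_⟩
    set τ := Real.sqrt t with hτdef
    have hτp : 0 < τ := Real.sqrt_pos.mpr ht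
    have hττ : τ * τ = t := Real.mul_self_sqrt ht.le
    have h1 : f t ≤ Fobj δ t τ := hmin t ht τ hτp
    have hG := G_le (2/τ) (by positivity)
    have hA : (0:ℝ) ≤ (δ-1/2)/2 + 1/2 + Ksec/2 := by
      have := Ksec_nonneg
      linarith
    have hFt : Fobj δ t τ ≤ τ*((δ-1/2)/2 + 1/2 + Ksec/2) := by
      unfold Fobj
      have e : t/(2*τ) = τ/2 := by
        rw [div_eq_iff (by positivity)]
        nlinarith [hττ]
      rw [e]
      have h3 : τ/2 * (∫ x in Set.Ioi (2/τ), (x - 2/τ)^2 * stdPDF x) ≤ τ/2 * Ksec :=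
        mul_le_mul_of_nonneg_left hG (by positivity)
      nlinarith [h3]
    have hsq : τ ≤ Real.sqrt 2 * Real.sqrt (t*δ) := by
      rw [← Real.sqrt_mul (by norm_num : (0:ℝ) ≤ 2)]
      apply Real.sqrt_le_sqrt
      nlinarith
    have hsqn : 0 ≤ Real.sqrt (t*δ) := Real.sqrt_nonneg _
    have h2 : τ*((δ-1/2)/2 + 1/2 + Ksec/2)
        ≤ Real.sqrt 2 * Real.sqrt (t*δ) * ((δ-1/2)/2 + 1/2 + Ksec/2) :=
      mul_le_mul_of_nonneg_right hsq hA
    have hC : (0:ℝ) ≤ 2*Real.sqrt 2*((δ-1/2)/2 + 1/2 + Ksec/2) := by positivity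
    calc f t ≤ Fobj δ t τ := h1
      _ ≤ τ*((δ-1/2)/2 + 1/2 + Ksec/2) := hFt
      _ ≤ Real.sqrt 2 * Real.sqrt (t*δ) * ((δ-1/2)/2 + 1/2 + Ksec/2) := h2
      _ = (2*Real.sqrt 2*((δ-1/2)/2 + 1/2 + Ksec/2)) * (Real.sqrt (t*δ)/2) := by ring
      _ ≤ (2*Real.sqrt 2*((δ-1/2)/2 + 1/2 + Ksec/2)) * (Real.sqrt (t*δ)/2 + 1) := by
          apply mul_le_mul_of_nonneg_left _ hC
          linarith
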